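/- The strong metric dimension of the Jahangir graph J(4,3) equals 3. -/

import Mathlib

/-- The generalized Jahangir graph `J(n,m)`: vertices are `none` (the central
vertex `c`) and `some a` for `a : ZMod (n*m)` (the cycle vertex `u_{a+1}`).
Cycle vertices are adjacent when consecutive, and `c` is adjacent to
`u_{nk+1}`, i.e. to `some (n*k)`, for `k = 0, …, m-1`. -/
def jahangir (n m : ℕ) : SimpleGraph (Option (ZMod (n * m))) where
  Adj x y :=
    (x = none ∧ ∃ a : ZMod (n * m), y = some a ∧
        ∃ k : ℕ, k < m ∧ a = ((n * k : ℕ) : ZMod (n * m))) ∨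
    (y = none ∧ ∃ a : ZMod (n * m), x = some a ∧
        ∃ k : ℕ, k < m ∧ a = ((n * k : ℕ) : ZMod (n * m))) ∨
    (∃ a b : ZMod (n * m), x = some a ∧ y = some b ∧ a ≠ b ∧ (b = a + 1 ∨ a = b + 1))
  symm := by
    refine ⟨?_⟩
    rintro x y (⟨hx, a, hy, hk⟩ | ⟨hy, a, hx, hk⟩ | ⟨a, b, hx, hy, hab, h⟩)
    · exact Or.inr (Or.inl ⟨hx, a, hy, hk⟩)
    · exact Or.inl ⟨hy, a, hx, hk⟩
    · exact Or.inr (Or.inr ⟨b, a, hy, hx, hab.symm, h.symm⟩)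
  loopless := by
    refine ⟨?_⟩
    rintro x (⟨hx, a, hy, _⟩ | ⟨hy, a, hx, _⟩ | ⟨a, b, hx, hy, hab, _⟩)
    · rw [hx] at hy; exact nomatch hy
    · rw [hy] at hx; exact nomatch hx
    · rw [hx] at hy; exact hab (Option.some.inj hy)

/-- `u` and `v` are mutually maximally distant in `G`. -/
def MMD {V : Type*} (G : SimpleGraph V) (u v : V) : Prop :=
  (∀ w, G.Adj u w → G.dist w v ≤ G.dist u v) ∧
  (∀ w, G.Adj v w → G.dist u w ≤ G.dist u v)

/-- The strong resolving graph of `G`: distinct vertices are adjacent iff MMD. -/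
def strongResolvingGraph {V : Type*} (G : SimpleGraph V) : SimpleGraph V where
  Adj u v := u ≠ v ∧ MMD G u v
  symm := by
    refine ⟨?_⟩
    rintro u v ⟨hne, h1, h2⟩
    refine ⟨hne.symm, ?_, ?_⟩
    · intro w hw
      rw [SimpleGraph.dist_comm, SimpleGraph.dist_comm (u := v)]
      exact h2 w hw
    · intro w hw
      rw [SimpleGraph.dist_comm, SimpleGraph.dist_comm (u := v)]
      exact h1 w hw
  loopless := ⟨by intro u h; exact h.1 rfl⟩

/-- The vertex covering number `α(G)`. -/
noncomputable def vertexCoverNumber {V : Type*} (G : SimpleGraph V) : ℕ :=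
  sInf {k | ∃ S : Finset V, S.card = k ∧ ∀ u v, G.Adj u v → u ∈ S ∨ v ∈ S}

/-- The independence number `β(G)`. -/
noncomputable def indepNumber {V : Type*} (G : SimpleGraph V) : ℕ :=
  sSup {k | ∃ S : Finset V, S.card = k ∧ ∀ u ∈ S, ∀ v ∈ S, ¬ G.Adj u v}

/-- `W` is a strong resolving set of `G`. -/
def IsStrongResolvingSet {V : Type*} (G : SimpleGraph V) (W : Set V) : Prop :=
  ∀ u v : V, u ≠ v → ∃ w ∈ W,
    G.dist u w = G.dist u v + G.dist v w ∨ G.dist v w = G.dist v u + G.dist u w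

/-- The strong metric dimension of `G`. -/
noncomputable def sdim {V : Type*} (G : SimpleGraph V) : ℕ :=
  sInf {k | ∃ W : Finset V, W.card = k ∧ IsStrongResolvingSet G ↑W}

/-- Vertex set of the internal cycle `c u_{nk+1} … u_{n(k+1)+1} c` of `J(n,m)`. -/
def internalCycle (n m k : ℕ) : Set (Option (ZMod (n * m))) :=
  insert none {x | ∃ i ≤ n, x = some ((n * k + i : ℕ) : ZMod (n * m))}

/-- Cycle vertices of `J(n,m)` not adjacent to the central vertex `c` (the set `U₂`). -/
def inU2 (n m : ℕ) (x : Option (ZMod (n * m))) : Prop :=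
  ∃ a : ZMod (n * m), x = some a ∧ ¬ ∃ k : ℕ, k < m ∧ a = ((n * k : ℕ) : ZMod (n * m))

section DistEq
variable {V : Type*} (G : SimpleGraph V) (δ : V → V → ℕ)

lemma dist_eq_of (h0 : ∀ x, δ x x = 0)
    (h3 : ∀ x y, x ≠ y → ∃ z, G.Adj x z ∧ δ z y + 1 = δ x y)
    (h4 : ∀ x y z, G.Adj x z → δ x y ≤ δ z y + 1) :
    ∀ x y, G.dist x y = δ x y := by
  have key : ∀ n x y, δ x y = n → G.Reachable x y ∧ G.dist x y ≤ n := by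
    intro n
    induction n using Nat.strong_induction_on with
    | _ n ih =>
      intro x y hn
      rcases eq_or_ne x y with rfl | hne
      · exact ⟨SimpleGraph.Reachable.refl x, by simp [SimpleGraph.dist_self]⟩
      · obtain ⟨z, hadj, hz⟩ := h3 x y hne
        have hzy : δ z y = n - 1 := by omega
        have hlt : n - 1 < n := by omega
        obtain ⟨hr, hd⟩ := ih (n - 1) hlt z y hzy
        obtain ⟨p, hp⟩ := hr.exists_walk_length_eq_dist
        refine ⟨⟨SimpleGraph.Walk.cons hadj p⟩, ?_⟩
        calc G.dist x y ≤ (SimpleGraph.Walk.cons hadj p).length := SimpleGraph.dist_le _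
          _ = p.length + 1 := by simp [SimpleGraph.Walk.length_cons]
          _ ≤ n := by omega
  have hwalk : ∀ {x y : V} (p : G.Walk x y), δ x y ≤ p.length := by
    intro x y p
    induction p with
    | nil => simp [h0]
    | cons h p ih =>
      calc δ _ _ ≤ δ _ _ + 1 := h4 _ _ _ h
        _ ≤ _ := by simp [SimpleGraph.Walk.length_cons]; omega
  intro x y
  obtain ⟨hr, hd⟩ := key (δ x y) x y rfl
  obtain ⟨p, hp⟩ := hr.exists_walk_length_eq_dist
  have := hwalk p
  omega

end DistEq

abbrev JV := Option (ZMod (4 * 3))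

instance jadj_dec : DecidableRel (jahangir 4 3).Adj := fun x y => by
  unfold jahangir
  exact inferInstanceAs (Decidable (_ ∨ _ ∨ _))

def hubd (a : ZMod (4 * 3)) : ℕ := 1 + min (a.val % 4) (4 - a.val % 4)

def δJ : JV → JV → ℕ
  | none, none => 0
  | none, some a => hubd a
  | some a, none => hubd a
  | some a, some b =>
      min (min ((a.val + 12 - b.val) % 12) ((b.val + 12 - a.val) % 12)) (hubd a + hubd b)

lemma jdist_eq : ∀ x y : JV, (jahangir 4 3).dist x y = δJ x y :=
  dist_eq_of (jahangir 4 3) δJ (by decide) (by decide) (by decide)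

def srsδ (W : Finset JV) : Prop :=
  ∀ u v : JV, u ≠ v → ∃ w ∈ W, (δJ u w = δJ u v + δJ v w ∨ δJ v w = δJ v u + δJ u w)

instance : DecidablePred srsδ := fun W => by unfold srsδ; infer_instance

lemma srs_iff (W : Finset JV) : IsStrongResolvingSet (jahangir 4 3) ↑W ↔ srsδ W := by
  unfold IsStrongResolvingSet srsδ
  simp only [jdist_eq, Finset.mem_coe]

theorem stmt_5 : sdim (jahangir 4 3) = 3 := by
  have hmem : 3 ∈ {k | ∃ W : Finset JV, W.card = k ∧ IsStrongResolvingSet (jahangir 4 3) ↑W} := by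
    refine ⟨{some 2, some 6, some 10}, by decide, ?_⟩
    rw [srs_iff]
    decide
  apply le_antisymm
  · exact Nat.sInf_le hmem
  · obtain ⟨W, hcard, hsrs⟩ := Nat.sInf_mem ⟨3, hmem⟩
    rw [srs_iff] at hsrs
    rw [sdim, ← hcard]
    obtain ⟨w1, hw1, hp1⟩ := hsrs (some 1) (some 6) (by decide)
    obtain ⟨w2, hw2, hp2⟩ := hsrs (some 2) (some 9) (by decide)
    obtain ⟨w3, hw3, hp3⟩ := hsrs (some 3) (some 10) (by decide)
    have key1 : ∀ w : JV, (δJ (some 1) w = δJ (some 1) (some 6) + δJ (some 6) w ∨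
        δJ (some 6) w = δJ (some 6) (some 1) + δJ (some 1) w) → w = some 1 ∨ w = some 6 := by
      decide
    have key2 : ∀ w : JV, (δJ (some 2) w = δJ (some 2) (some 9) + δJ (some 9) w ∨
        δJ (some 9) w = δJ (some 9) (some 2) + δJ (some 2) w) → w = some 2 ∨ w = some 9 := by
      decide
    have key3 : ∀ w : JV, (δJ (some 3) w = δJ (some 3) (some 10) + δJ (some 10) w ∨
        δJ (some 10) w = δJ (some 10) (some 3) + δJ (some 3) w) → w = some 3 ∨ w = some 10 := by
      decide
    have h1 := key1 w1 hp1
    have h2 := key2 w2 hp2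
    have h3 := key3 w3 hp3
    have hsub : ({w1, w2, w3} : Finset JV) ⊆ W := by
      intro x hx
      simp only [Finset.mem_insert, Finset.mem_singleton] at hx
      rcases hx with rfl | rfl | rfl <;> assumption
    have hc3 : ({w1, w2, w3} : Finset JV).card = 3 := by
      rw [Finset.card_insert_of_notMem, Finset.card_insert_of_notMem, Finset.card_singleton]
      · simp only [Finset.mem_singleton]
        rcases h2 with rfl | rfl <;> rcases h3 with rfl | rfl <;> decide
      · simp only [Finset.mem_insert, Finset.mem_singleton]
        rcases h1 with rfl | rfl <;> rcases h2 with rfl | rfl <;>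
          rcases h3 with rfl | rfl <;> decide
    calc 3 = ({w1, w2, w3} : Finset JV).card := hc3.symm
      _ ≤ W.card := Finset.card_le_card hsub
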